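/- Let N ≥ 2. The testing design consisting of the two tests (0, 1, …, N−1) and (N−1, N−2, …, 0), listing all items of Fin N in increasing and in decreasing order respectively, is feasible for (N, 2); consequently T(N, 2) = 2. -/

import Mathlib

/-- The outcome of a cascaded test `t` (a list of items) on a defective set `S`:
the first element of `t` belonging to `S`, or `none` if there is none. -/
def outcome {N : ℕ} (t : List (Fin N)) (S : Finset (Fin N)) : Option (Fin N) :=
  (t.filter (fun x => x ∈ S)).head?

/-- A testing design `𝒯` (an indexed family of tests) is feasible for `(N, K)` if the
map sending each `S ⊆ Fin N` with `|S| ≤ K` to its vector of test outcomes is injective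
on `{S | |S| ≤ K}`. -/
def Feasible (N K : ℕ) {T : ℕ} (𝒯 : Fin T → List (Fin N)) : Prop :=
  Set.InjOn (fun (S : Finset (Fin N)) => fun i : Fin T => outcome (𝒯 i) S)
    {S : Finset (Fin N) | S.card ≤ K}

/-- `TNK N K`: the minimum number of tests over all duplicate-free testing designs
feasible for `(N, K)`. -/
noncomputable def TNK (N K : ℕ) : ℕ :=
  sInf {T : ℕ | ∃ 𝒯 : Fin T → List (Fin N), (∀ i, (𝒯 i).Nodup) ∧ Feasible N K 𝒯}

/-- `fT 𝒯 S v`: the number of tests in the design `𝒯` whose outcome on `S` is `some v`. -/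
def fT {N T : ℕ} (𝒯 : Fin T → List (Fin N)) (S : Finset (Fin N)) (v : Fin N) : ℕ :=
  (Finset.univ.filter (fun i : Fin T => outcome (𝒯 i) S = some v)).card

/-- A design is in systematic form if every test is nonempty and the first element of
each test does not occur in any other test. -/
def Systematic {N T : ℕ} (𝒯 : Fin T → List (Fin N)) : Prop :=
  ∀ i : Fin T, 𝒯 i ≠ [] ∧ ∀ u : Fin N, (𝒯 i).head? = some u → ∀ j : Fin T, j ≠ i → u ∉ 𝒯 j

/-!
The increasing test reports the least element of `S` and the decreasing test its greatest
one, and a set with at most two elements is determined by these two. Conversely a single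
test cannot separate all sets of size at most two: if it starts with `x` then `{x}` and
`{x, y}` give the same outcome, and an empty test separates nothing.
-/

theorem List.Pairwise.rel_of_head?_filter_eq_some {α : Type*} {R : α → α → Prop} [Std.Refl R]
    {l : List α} {p : α → Bool} {a b : α} (hl : l.Pairwise R)
    (h : (l.filter p).head? = some a) (hb : b ∈ l) (hpb : p b) : R a b := by
  obtain ⟨tl, htl⟩ := List.head?_eq_some_iff.1 h
  have hsorted : (a :: tl).Pairwise R := htl ▸ hl.filter p
  exact hsorted.rel_head (htl ▸ List.mem_filter.2 ⟨hb, hpb⟩)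

theorem Finset.eq_pair_of_isLeast_of_isGreatest {α : Type*} [PartialOrder α] [DecidableEq α]
    {s : Finset α} {a b : α} (hs : s.card ≤ 2) (ha : IsLeast (s : Set α) a)
    (hb : IsGreatest (s : Set α) b) : s = {a, b} := by
  rcases eq_or_ne a b with rfl | hab
  · rw [Finset.pair_eq_singleton, Finset.eq_singleton_iff_unique_mem]
    exact ⟨ha.1, fun x hx => le_antisymm (hb.2 hx) (ha.2 hx)⟩
  · refine (Finset.eq_of_subset_of_card_le ?_ (by rwa [Finset.card_pair hab])).symm
    exact Finset.insert_subset ha.1 (Finset.singleton_subset_iff.2 hb.1)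

section Outcome

variable {N : ℕ} {t : List (Fin N)} {S : Finset (Fin N)} {v : Fin N}

theorem mem_of_outcome_eq_some (h : outcome t S = some v) : v ∈ S := by
  simpa using (List.mem_filter.1 (List.mem_of_mem_head? h)).2

theorem outcome_eq_none_iff : outcome t S = none ↔ ∀ x ∈ t, x ∉ S := by
  simp [outcome]

theorem outcome_cons_of_mem {x : Fin N} (hx : x ∈ S) : outcome (x :: t) S = some x := by
  simp [outcome, hx]

theorem outcome_eq_none_iff_eq_empty (ht : ∀ x, x ∈ t) : outcome t S = none ↔ S = ∅ := by
  simp [outcome_eq_none_iff, ht, Finset.eq_empty_iff_forall_notMem]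

theorem isLeast_of_outcome_finRange_eq_some (h : outcome (List.finRange N) S = some v) :
    IsLeast (S : Set (Fin N)) v :=
  ⟨mem_of_outcome_eq_some h, fun w hw =>
    ((List.pairwise_lt_finRange N).imp le_of_lt).rel_of_head?_filter_eq_some h
      (List.mem_finRange w) (by simpa using hw)⟩

theorem isGreatest_of_outcome_reverse_finRange_eq_some
    (h : outcome (List.finRange N).reverse S = some v) : IsGreatest (S : Set (Fin N)) v :=
  have hsorted : (List.finRange N).reverse.Pairwise (· ≥ ·) :=
    List.pairwise_reverse.2 ((List.pairwise_lt_finRange N).imp le_of_lt)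
  ⟨mem_of_outcome_eq_some h, fun w hw =>
    hsorted.rel_of_head?_filter_eq_some h (by simp) (by simpa using hw)⟩

end Outcome

theorem feasible_finRange_reverse (N : ℕ) :
    Feasible N 2 ![List.finRange N, (List.finRange N).reverse] := by
  intro S₁ hS₁ S₂ hS₂ h
  have hmin : outcome (List.finRange N) S₁ = outcome (List.finRange N) S₂ := congrFun h 0
  have hmax : outcome (List.finRange N).reverse S₁ = outcome (List.finRange N).reverse S₂ :=
    congrFun h 1
  have hall : ∀ x, x ∈ (List.finRange N).reverse := by simp
  rcases ha : outcome (List.finRange N) S₁ with _ | a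
  · rw [ha] at hmin
    rw [(outcome_eq_none_iff_eq_empty List.mem_finRange).1 ha,
      (outcome_eq_none_iff_eq_empty List.mem_finRange).1 hmin.symm]
  · rcases hb : outcome (List.finRange N).reverse S₁ with _ | b
    · rw [(outcome_eq_none_iff_eq_empty hall).1 hb] at ha
      exact absurd (mem_of_outcome_eq_some ha) (Finset.notMem_empty a)
    · rw [ha] at hmin
      rw [hb] at hmax
      rw [Finset.eq_pair_of_isLeast_of_isGreatest hS₁ (isLeast_of_outcome_finRange_eq_some ha)
          (isGreatest_of_outcome_reverse_finRange_eq_some hb),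
        Finset.eq_pair_of_isLeast_of_isGreatest hS₂
          (isLeast_of_outcome_finRange_eq_some hmin.symm)
          (isGreatest_of_outcome_reverse_finRange_eq_some hmax.symm)]

theorem exists_ne_outcome_eq {N : ℕ} (hN : 2 ≤ N) (t : List (Fin N)) :
    ∃ S₁ S₂ : Finset (Fin N),
      S₁.card ≤ 2 ∧ S₂.card ≤ 2 ∧ S₁ ≠ S₂ ∧ outcome t S₁ = outcome t S₂ := by
  have : Nontrivial (Fin N) := Fin.nontrivial_iff_two_le.2 hN
  cases t with
  | nil =>
    obtain ⟨x⟩ := (inferInstance : Nonempty (Fin N))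
    exact ⟨∅, {x}, by simp, by simp, (Finset.singleton_ne_empty x).symm, rfl⟩
  | cons x t =>
    obtain ⟨y, hy⟩ := exists_ne x
    refine ⟨{x}, {x, y}, by simp, Finset.card_le_two, fun h => hy ?_, ?_⟩
    · have hyx : y ∈ ({x} : Finset (Fin N)) :=
        h ▸ Finset.mem_insert_of_mem (Finset.mem_singleton_self y)
      exact Finset.mem_singleton.1 hyx
    · rw [outcome_cons_of_mem (Finset.mem_singleton_self x),
        outcome_cons_of_mem (Finset.mem_insert_self x {y})]

theorem not_feasible_of_le_one {N T : ℕ} (hN : 2 ≤ N) (hT : T ≤ 1)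
    (𝒯 : Fin T → List (Fin N)) : ¬ Feasible N 2 𝒯 := by
  intro hfeas
  rcases Nat.le_one_iff_eq_zero_or_eq_one.1 hT with rfl | rfl
  · obtain ⟨S₁, S₂, hS₁, hS₂, hne, -⟩ := exists_ne_outcome_eq hN []
    exact hne (hfeas hS₁ hS₂ (funext fun i => i.elim0))
  · obtain ⟨S₁, S₂, hS₁, hS₂, hne, heq⟩ := exists_ne_outcome_eq hN (𝒯 0)
    exact hne (hfeas hS₁ hS₂ (funext fun i => Subsingleton.elim 0 i ▸ heq))

theorem stmt11 (N : ℕ) (hN : 2 ≤ N) :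
    Feasible N 2 (![List.finRange N, (List.finRange N).reverse]) ∧ TNK N 2 = 2 := by
  refine ⟨feasible_finRange_reverse N, IsLeast.csInf_eq ⟨?_, ?_⟩⟩
  · refine ⟨_, fun i => ?_, feasible_finRange_reverse N⟩
    fin_cases i <;> simp [List.nodup_finRange]
  · rintro T ⟨𝒯, -, hfeas⟩
    by_contra hT
    exact not_feasible_of_le_one hN (by omega) 𝒯 hfeas
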